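/- arXiv:1210.3696 — 2 statements merged into one kernel-verified Lean document; each statement's English description precedes it below -/
import Mathlib

section
/- For every ordinal γ and every natural number n with 1 < n < ω, the Banach space C₀([0, ω^(ω^γ · n)]) is isomorphic to c₀(ω^(ω^γ), C₀([0, ω^(ω^γ)])). -/
set_option synthInstance.maxHeartbeats 1000000
set_option maxHeartbeats 1000000

noncomputable section

open Ordinal Set Metric

/-- The compact ordinal interval `[0, α]`. -/
instance ordIicCompact (α : Ordinal) : CompactSpace (Set.Iic α) := by
  rw [← isCompact_iff_compactSpace, ← Set.Icc_bot]
  exact isCompact_Icc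

/-- `C₀([0, α])`: continuous functions on `[0, α]` vanishing at `α`, as a submodule. -/
def CzeroSub (α : Ordinal) : Submodule ℝ C(Set.Iic α, ℝ) where
  carrier := {f | f ⟨α, Set.self_mem_Iic⟩ = 0}
  add_mem' := by intro f g hf hg; simp only [Set.mem_setOf_eq] at *; simp [hf, hg]
  zero_mem' := rfl
  smul_mem' := by intro c f hf; simp only [Set.mem_setOf_eq] at *; simp [hf]

/-- The Banach space `C₀([0, α])`. -/
abbrev Czero (α : Ordinal) := ↥(CzeroSub α)

/-- `c₀(S, X)` as a submodule of `ℓ∞(S, X)`. -/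
def czeroSub (S : Type*) (X : Type*) [NormedAddCommGroup X] [NormedSpace ℝ X] :
    Submodule ℝ (lp (fun _ : S => X) ⊤) where
  carrier := {f | ∀ ε : ℝ, 0 < ε → {s : S | ε < ‖(f : ∀ _ : S, X) s‖}.Finite}
  add_mem' := by
    intro f g hf hg ε hε
    refine ((hf (ε/2) (by linarith)).union (hg (ε/2) (by linarith))).subset ?_
    intro s hs
    simp only [Set.mem_setOf_eq, Set.mem_union] at *
    by_contra hc
    push_neg at hc
    have := norm_add_le ((f : ∀ _ : S, X) s) ((g : ∀ _ : S, X) s)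
    simp only [lp.coeFn_add, Pi.add_apply] at hs
    linarith [hc.1, hc.2]
  zero_mem' := by
    intro ε hε
    convert Set.finite_empty
    ext s; simp [hε.not_gt, le_of_lt hε]
  smul_mem' := by
    intro c f hf ε hε
    rcases eq_or_ne c 0 with rfl | hc
    · convert Set.finite_empty
      ext s; simp [hε.not_gt, le_of_lt hε]
    · refine (hf (ε / ‖c‖) (div_pos hε (norm_pos_iff.2 hc))).subset ?_
      intro s hs
      simp only [Set.mem_setOf_eq, lp.coeFn_smul, Pi.smul_apply, norm_smul] at *
      exact (div_lt_iff₀ (norm_pos_iff.2 hc)).2 (by rw [mul_comm]; exact hs)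

/-- The Banach space `c₀(S, X)`. -/
abbrev czero (S : Type*) (X : Type*) [NormedAddCommGroup X] [NormedSpace ℝ X] :=
  ↥(czeroSub S X)

instance (α : Ordinal) : NormedAddCommGroup (Czero α) := inferInstance
instance (α : Ordinal) : NormedSpace ℝ (Czero α) := inferInstance
instance (S : Type*) (X : Type*) [NormedAddCommGroup X] [NormedSpace ℝ X] :
    NormedAddCommGroup (czero S X) := inferInstance
instance (S : Type*) (X : Type*) [NormedAddCommGroup X] [NormedSpace ℝ X] :
    NormedSpace ℝ (czero S X) := inferInstance

section Szlenk

variable (X : Type*) [NormedAddCommGroup X] [NormedSpace ℝ X]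

open NormedSpace

/-- A set of functionals is weak-star open if it is open in the weak-star topology. -/
def IsWstarOpen (V : Set (StrongDual ℝ X)) : Prop :=
  IsOpen (StrongDual.toWeakDual '' V : Set (WeakDual ℝ X))

/-- The ε-Szlenk derivation. -/
def szDeriv (ε : ℝ) (B : Set (StrongDual ℝ X)) : Set (StrongDual ℝ X) :=
  {x ∈ B | ∀ V : Set (StrongDual ℝ X), IsWstarOpen X V → x ∈ V → ε < Metric.diam (B ∩ V)}

/-- Transfinite iterates of the ε-Szlenk derivation. -/
def szIter (ε : ℝ) (B : Set (StrongDual ℝ X)) (β : Ordinal.{0}) : Set (StrongDual ℝ X) :=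
  Ordinal.limitRecOn β B (fun _ ih => szDeriv X ε ih)
    (fun β _ ih => ⋂ (σ : Ordinal.{0}) (h : σ < β), ih σ h)

/-- The ε-Szlenk index `Sz(X, ε)`. -/
def SzE (ε : ℝ) : Ordinal :=
  sInf {β | szIter X ε (Metric.closedBall (0 : StrongDual ℝ X) 1) β = ∅}

/-- `X` has a (well-defined) Szlenk index. -/
def SzDefined : Prop :=
  ∀ ε : ℝ, 0 < ε → ∃ β : Ordinal, szIter X ε (Metric.closedBall (0 : StrongDual ℝ X) 1) β = ∅

/-- The Szlenk index `Sz(X)`. -/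
def Sz : Ordinal := ⨆ ε : {ε : ℝ // 0 < ε}, SzE X ε

/-- A weak-star slice. -/
def wstarSlice (x : X) (t : ℝ) : Set (StrongDual ℝ X) := {x' | t < x' x}

/-- The ε-dentability derivation. -/
def dzDeriv (ε : ℝ) (B : Set (StrongDual ℝ X)) : Set (StrongDual ℝ X) :=
  {x' ∈ B | ∀ (x : X) (t : ℝ), x' ∈ wstarSlice X x t → ε < Metric.diam (B ∩ wstarSlice X x t)}

/-- Transfinite iterates of the ε-dentability derivation. -/
def dzIter (ε : ℝ) (B : Set (StrongDual ℝ X)) (β : Ordinal.{0}) : Set (StrongDual ℝ X) :=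
  Ordinal.limitRecOn β B (fun _ ih => dzDeriv X ε ih)
    (fun β _ ih => ⋂ (σ : Ordinal.{0}) (h : σ < β), ih σ h)

/-- The ε-w*-dentability index `Dz(X, ε)`. -/
def DzE (ε : ℝ) : Ordinal :=
  sInf {β | dzIter X ε (Metric.closedBall (0 : StrongDual ℝ X) 1) β = ∅}

/-- The w*-dentability index `Dz(X)`. -/
def Dz : Ordinal := ⨆ ε : {ε : ℝ // 0 < ε}, DzE X ε

end Szlenk


/-!
For `ω ≤ α` the interval `[0, α * β]` is made of the points `α * s` (`s ≤ β`) and of the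
blocks `(α * s, α * s + α] = {α * s + 1 + t | t ≤ α}` (`s < β`), each a copy of `[0, α]`.
Sending `f` to its trace `s ↦ f (α * s)` and to the block functions
`t ↦ f (α * s + 1 + t) - f (α * s + α)` is an isomorphism
`C₀([0, α * β]) ≅ c₀(β, C₀([0, α])) × C₀([0, β])`: continuity of `f` at the limit points `α * σ`
is what makes the block functions tend to zero, and what makes the glued inverse continuous.
For `δ = ω ^ ω ^ γ` we have `ω ^ (ω ^ γ * n) = δ ^ n = δ ^ (n - 1) * δ`, and induction on `n`
together with `c₀(δ, c₀(δ, X)) ≅ c₀(δ × δ, X) ≅ c₀(δ, X)` and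
`c₀(δ, X) × X ≅ c₀(Option δ, X) ≅ c₀(δ, X)` (`δ` is infinite) gives the theorem.
-/

open Filter Topology

theorem Order.IsSuccLimit.exists_forall_lt_of_finite {α : Type*} [LinearOrder α] [SuccOrder α]
    [NoMaxOrder α] {s : α} (hs : Order.IsSuccLimit s) {T : Set α} (hT : T.Finite) :
    ∃ a < s, ∀ t ∈ T, t < s → t < a := by
  obtain ⟨b, hb⟩ := not_isMin_iff.1 hs.not_isMin
  have : Nonempty (Iio s) := ⟨⟨b, hb⟩⟩
  obtain ⟨M, hM⟩ := (show {t : Iio s | t.1 ∈ T}.Finite from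
    hT.preimage Subtype.val_injective.injOn).exists_le
  exact ⟨Order.succ M, hs.succ_lt M.2, fun t ht hts => Order.lt_succ_of_le (hM ⟨t, hts⟩ ht)⟩

section SuccOrderTopology

variable {α β : Type*} [LinearOrder α] [TopologicalSpace α] [OrderTopology α] [SuccOrder α]
  [NoMaxOrder α] [LinearOrder β] [TopologicalSpace β] [OrderTopology β] [SuccOrder β]
  [NoMaxOrder β]

theorem isClopen_Iic_of_succOrder (a : α) : IsClopen (Iic a) :=
  ⟨isClosed_Iic, Order.Iio_succ a ▸ isOpen_Iio⟩

theorem Ioc_mem_nhds_of_mem {a b x : α} (hx : x ∈ Ioc a b) : Ioc a b ∈ 𝓝 x :=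
  (Ioi_inter_Iic (a := a) (b := b) ▸
    isOpen_Ioi.inter (isClopen_Iic_of_succOrder b).isOpen).mem_nhds hx

theorem GaloisConnection.continuous_l {l : α → β} {u : β → α} (gc : GaloisConnection l u) :
    Continuous l := by
  refine continuous_iff_continuousAt.2 fun x => ?_
  have hle : Iic (u (l x)) ∈ 𝓝 x := (isClopen_Iic_of_succOrder _).isOpen.mem_nhds (gc.le_u_l x)
  by_cases hmin : IsMin (l x)
  · rw [ContinuousAt, SuccOrder.nhds_of_isMin hmin, tendsto_pure]
    filter_upwards [hle] with y hy using (gc.l_le hy).antisymm (hmin (gc.l_le hy))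
  refine (SuccOrder.hasBasis_nhds_Ioc_of_exists_lt (not_isMin_iff.1 hmin)).tendsto_right_iff.2
    fun b hb => ?_
  have hgt : Ioi (u b) ∈ 𝓝 x := isOpen_Ioi.mem_nhds (lt_of_not_ge fun h => hb.not_ge (gc.l_le h))
  filter_upwards [hle, hgt] with y hy hy'
  exact ⟨lt_of_not_ge fun h => (not_le.2 hy') (gc.le_u h), gc.l_le hy⟩

end SuccOrderTopology

namespace Ordinal

open Order

theorem continuous_sub_right (a : Ordinal) : Continuous (· - a) :=
  GaloisConnection.continuous_l (u := (a + ·)) fun _ _ => Ordinal.sub_le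

def ceilDiv (α x : Ordinal) : Ordinal := sInf {s | x ≤ α * s}

theorem gc_ceilDiv {α : Ordinal} (hα : α ≠ 0) : GaloisConnection (ceilDiv α) (α * ·) :=
  fun x _ => ⟨fun h => (csInf_mem (⟨x, le_mul_right x (pos_iff_ne_zero.2 hα)⟩ :
    {s | x ≤ α * s}.Nonempty)).trans (mul_le_mul_right h α), fun h => csInf_le' h⟩

theorem ceilDiv_mul {α : Ordinal} (hα : α ≠ 0) (s : Ordinal) : ceilDiv α (α * s) = s :=
  ((gc_ceilDiv hα).l_le le_rfl).antisymm
    ((mul_le_mul_iff_of_pos_left (pos_iff_ne_zero.2 hα)).1 ((gc_ceilDiv hα).le_u_l _))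

theorem ceilDiv_eq_succ {α x p : Ordinal} (hα : α ≠ 0) (hx : x ∈ Ioc (α * p) (α * p + α)) :
    ceilDiv α x = succ p :=
  ((gc_ceilDiv hα).l_le (by rw [mul_succ]; exact hx.2)).antisymm
    (Order.succ_le_of_lt (lt_of_not_ge fun h => hx.1.not_ge ((gc_ceilDiv hα).le_u h)))

theorem eq_zero_or_mem_Ioc_or_eq_mul {α : Ordinal} (hα : α ≠ 0) (x : Ordinal) :
    x = 0 ∨ (∃ p, x ∈ Ioc (α * p) (α * p + α)) ∨ ∃ s, IsSuccLimit s ∧ x = α * s := by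
  have gc := gc_ceilDiv hα
  rcases zero_or_succ_or_isSuccLimit (ceilDiv α x) with h | ⟨p, h⟩ | h
  · exact Or.inl (nonpos_iff_eq_zero.1 (by simpa [h] using gc.le_u_l x))
  · refine Or.inr (Or.inl ⟨p, lt_of_not_ge fun hp => ?_, ?_⟩)
    · exact (lt_succ p).not_ge (h ▸ gc.l_le hp)
    · rw [← mul_succ, h]
      exact gc.le_u_l x
  · refine Or.inr (Or.inr ⟨_, h, (gc.le_u_l x).antisymm ((mul_le_iff_of_isSuccLimit h).2
      fun b hb => (lt_of_not_ge fun hb' => hb.not_ge (gc.l_le hb')).le)⟩)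

theorem div_eq_of_mem_Ico {α x p : Ordinal} (hα : α ≠ 0) (hx : x ∈ Ico (α * p) (α * p + α)) :
    x / α = p :=
  ((div_le hα).2 (by rw [mul_succ]; exact hx.2)).antisymm ((mul_le_iff_le_div hα).1 hx.1)

theorem add_one_add_of_omega0_le (a : Ordinal) {α : Ordinal} (hα : ω ≤ α) :
    a + 1 + α = a + α := by
  rw [add_assoc, one_add_of_omega0_le hα]

theorem add_one_add_mem_Ioc {α t : Ordinal} (hα : ω ≤ α) (ht : t ≤ α) (a : Ordinal) :
    a + 1 + t ∈ Ioc a (a + α) :=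
  ⟨(lt_add_one a).trans_le le_self_add,
    add_one_add_of_omega0_le a hα ▸ (add_le_add_iff_left _).2 ht⟩

theorem exists_eq_add_one_add_of_mem_Ioc {α a x : Ordinal} (hα : ω ≤ α)
    (hx : x ∈ Ioc a (a + α)) :
    ∃ t ≤ α, x = a + 1 + t :=
  ⟨x - (a + 1), sub_le.2 (by rw [add_one_add_of_omega0_le a hα]; exact hx.2),
    (Ordinal.add_sub_cancel_of_le (succ_le_of_lt hx.1)).symm⟩

end Ordinal

-- An accumulation point `σ` of infinitely many such `s` would contradict continuity at `α * σ`.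
theorem Continuous.finite_setOf_lt_dist_block {F : Ordinal → ℝ} (hF : Continuous F)
    (α β : Ordinal) {ε : ℝ} (hε : 0 < ε) :
    {s | s < β ∧ ∃ x ∈ Ioc (α * s) (α * s + α), ε < dist (F x) (F (α * s + α))}.Finite := by
  rcases eq_or_ne α 0 with rfl | hα
  · simp
  by_contra hinf
  obtain ⟨σ, -, hacc⟩ :=
    Set.Infinite.exists_accPt_of_subset_isCompact hinf (isCompact_Icc (a := 0) (b := β))
      fun s hs => ⟨zero_le, hs.1.le⟩
  have hσ : Order.IsSuccLimit σ := hacc.isSuccLimit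
  have hpos : 0 < α * σ := mul_pos (pos_iff_ne_zero.2 hα) hσ.bot_lt
  obtain ⟨a, ha, hFa⟩ := (SuccOrder.hasBasis_nhds_Ioc_of_exists_lt ⟨0, hpos⟩).eventually_iff.1
    (Metric.tendsto_nhds.1 hF.continuousAt (ε / 2) (half_pos hε))
  obtain ⟨a', ha'σ, haa'⟩ := (lt_mul_iff_of_isSuccLimit hσ).1 ha
  obtain ⟨s, ⟨-, x, hx, hεx⟩, ha's, hsσ⟩ := (SuccOrder.accPt_principal.1 hacc).2 a' ha'σ
  have hsub : Ioc (α * s) (α * s + α) ⊆ Ioc a (α * σ) := by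
    refine Ioc_subset_Ioc (haa'.le.trans (mul_le_mul_right ha's.le α)) ?_
    rw [← mul_succ]
    exact mul_le_mul_right (hσ.succ_lt hsσ).le α
  have hend : α * s + α ∈ Ioc (α * s) (α * s + α) :=
    ⟨lt_add_of_pos_right _ (pos_iff_ne_zero.2 hα), le_rfl⟩
  linarith [dist_triangle_right (F x) (F (α * s + α)) (F (α * σ)), hFa (hsub hx), hFa (hsub hend)]

theorem bddAbove_range_of_finite_setOf_one_lt {S : Type*} {g : S → ℝ}
    (hg : {s | 1 < g s}.Finite) :
    BddAbove (range g) := by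
  refine ((hg.image g).bddAbove.union (bddAbove_Iic (a := 1))).mono ?_
  rintro _ ⟨s, rfl⟩
  by_cases h : 1 < g s
  · exact Or.inl ⟨s, h, rfl⟩
  · exact Or.inr (not_lt.1 h)

namespace czero

variable {S T X Y : Type*} [NormedAddCommGroup X] [NormedSpace ℝ X]
  [NormedAddCommGroup Y] [NormedSpace ℝ Y]

instance : FunLike (czero S X) S X where
  coe F := (F : lp (fun _ : S => X) ⊤)
  coe_injective _ _ h := Subtype.ext (lp.ext h)

@[ext]
theorem ext {F G : czero S X} (h : ∀ s, F s = G s) : F = G := DFunLike.ext F G h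

@[simp]
theorem add_apply (F G : czero S X) (s : S) : (F + G) s = F s + G s := rfl

@[simp]
theorem smul_apply (c : ℝ) (F : czero S X) (s : S) : (c • F) s = c • F s := rfl

theorem norm_apply_le (F : czero S X) (s : S) : ‖F s‖ ≤ ‖F‖ :=
  lp.norm_apply_le_norm ENNReal.top_ne_zero (F : lp (fun _ : S => X) ⊤) s

theorem norm_le_of_forall_le {F : czero S X} {C : ℝ} (hC : 0 ≤ C) (h : ∀ s, ‖F s‖ ≤ C) :
    ‖F‖ ≤ C :=
  lp.norm_le_of_forall_le hC h

theorem finite_setOf_lt_norm (F : czero S X) {ε : ℝ} (hε : 0 < ε) : {s | ε < ‖F s‖}.Finite :=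
  F.2 ε hε

def mk (f : S → X) (hf : ∀ ε : ℝ, 0 < ε → {s | ε < ‖f s‖}.Finite) : czero S X :=
  ⟨⟨f, memℓp_infty (bddAbove_range_of_finite_setOf_one_lt (hf 1 one_pos))⟩, hf⟩

@[simp]
theorem mk_apply (f : S → X) (hf) (s : S) : mk f hf s = f s := rfl

def comp (g : T → S) (hg : g.Injective) : czero S X →L[ℝ] czero T X :=
  LinearMap.mkContinuous
    { toFun := fun F => mk (F ∘ g) fun ε hε =>
        show (g ⁻¹' {s | ε < ‖F s‖}).Finite from (F.finite_setOf_lt_norm hε).preimage hg.injOn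
      map_add' := fun _ _ => rfl
      map_smul' := fun _ _ => rfl } 1
    fun F => by
      rw [one_mul]
      exact norm_le_of_forall_le (norm_nonneg F) fun t => F.norm_apply_le (g t)

@[simp]
theorem comp_apply (g : T → S) (hg : g.Injective) (F : czero S X) (t : T) :
    comp g hg F t = F (g t) := rfl

def reindex (e : S ≃ T) : czero S X ≃L[ℝ] czero T X :=
  .equivOfInverse (comp e.symm e.symm.injective) (comp e e.injective)
    (fun F => by ext; simp) (fun F => by ext; simp)

theorem finite_setOf_lt_norm_map (L : X →L[ℝ] Y) (F : czero S X) {ε : ℝ} (hε : 0 < ε) :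
    {s | ε < ‖L (F s)‖}.Finite := by
  refine (F.finite_setOf_lt_norm (div_pos hε (by positivity : 0 < ‖L‖ + 1))).subset fun s hs => ?_
  have hs : ε < ‖L (F s)‖ := hs
  change ε / (‖L‖ + 1) < ‖F s‖
  rw [div_lt_iff₀ (by positivity)]
  nlinarith [L.le_opNorm (F s), norm_nonneg (F s)]

def map (L : X →L[ℝ] Y) : czero S X →L[ℝ] czero S Y :=
  LinearMap.mkContinuous
    { toFun := fun F => mk (fun s => L (F s)) fun _ => finite_setOf_lt_norm_map L F
      map_add' := fun F G => by ext; simp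
      map_smul' := fun c F => by ext; simp } ‖L‖
    fun F => norm_le_of_forall_le (by positivity) fun s => L.le_opNorm_of_le (F.norm_apply_le s)

@[simp]
theorem map_apply (L : X →L[ℝ] Y) (F : czero S X) (s : S) : map L F s = L (F s) := rfl

def congrRight (e : X ≃L[ℝ] Y) : czero S X ≃L[ℝ] czero S Y :=
  .equivOfInverse (map e) (map e.symm) (fun F => by ext; simp) (fun F => by ext; simp)

def uncurry : czero S (czero T X) →L[ℝ] czero (S × T) X :=
  LinearMap.mkContinuous
    { toFun := fun G => mk (fun p : S × T => G p.1 p.2) fun ε hε =>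
        ((G.finite_setOf_lt_norm hε).biUnion fun s _ =>
          ((G s).finite_setOf_lt_norm hε).image (Prod.mk s)).subset fun p hp =>
          mem_biUnion (hp.trans_le ((G p.1).norm_apply_le p.2)) ⟨p.2, hp, rfl⟩
      map_add' := fun _ _ => rfl
      map_smul' := fun _ _ => rfl } 1
    fun G => by
      rw [one_mul]
      exact norm_le_of_forall_le (norm_nonneg G) fun p =>
        ((G p.1).norm_apply_le p.2).trans (G.norm_apply_le p.1)

def curry : czero (S × T) X →L[ℝ] czero S (czero T X) :=
  LinearMap.mkContinuous
    { toFun := fun F => mk (fun s => mk (fun t => F (s, t)) fun ε hε =>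
          show (Prod.mk s ⁻¹' {p | ε < ‖F p‖}).Finite from
            (F.finite_setOf_lt_norm hε).preimage (Prod.mk_right_injective s).injOn)
        fun ε hε => ((F.finite_setOf_lt_norm hε).image Prod.fst).subset fun s hs => by
          by_contra hs'
          refine (not_le.2 hs) (norm_le_of_forall_le hε.le fun t => not_lt.1 fun ht => hs' ?_)
          exact ⟨(s, t), ht, rfl⟩
      map_add' := fun _ _ => rfl
      map_smul' := fun _ _ => rfl } 1
    fun F => by
      rw [one_mul]
      exact norm_le_of_forall_le (norm_nonneg F) fun s =>
        norm_le_of_forall_le (norm_nonneg F) fun t => F.norm_apply_le (s, t)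

def uncurryEquiv : czero S (czero T X) ≃L[ℝ] czero (S × T) X :=
  .equivOfInverse uncurry curry (fun _ => rfl) (fun _ => rfl)

def eval (s : S) : czero S X →L[ℝ] X :=
  LinearMap.mkContinuous
    { toFun := fun F => F s
      map_add' := fun _ _ => rfl
      map_smul' := fun _ _ => rfl } 1
    fun F => by rw [one_mul]; exact F.norm_apply_le s

def ofProd : czero S X × X →L[ℝ] czero (Option S) X :=
  LinearMap.mkContinuous
    { toFun := fun p => mk (fun o => o.elim p.2 p.1) fun ε hε =>
        (((p.1.finite_setOf_lt_norm hε).image some).insert none).subset fun o ho => by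
          cases o with
          | none => exact mem_insert _ _
          | some s => exact mem_insert_of_mem _ ⟨s, ho, rfl⟩
      map_add' := fun p q => by ext (_ | s) <;> rfl
      map_smul' := fun c p => by ext (_ | s) <;> rfl } 1
    fun p => by
      rw [one_mul]
      refine norm_le_of_forall_le (norm_nonneg p) fun o => ?_
      cases o with
      | none => exact norm_snd_le p
      | some s => exact (p.1.norm_apply_le s).trans (norm_fst_le p)

def optionEquivProd : czero (Option S) X ≃L[ℝ] czero S X × X :=
  .equivOfInverse ((comp some (Option.some_injective S)).prod (eval none)) ofProd
    (fun F => by ext (_ | s) <;> rfl) (fun _ => rfl)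

theorem nonempty_prod_equiv [Infinite S] : Nonempty ((czero S X × X) ≃L[ℝ] czero S X) := by
  obtain ⟨e⟩ : Nonempty (Option S ≃ S) := Cardinal.eq.1 <| by
    rw [Cardinal.mk_option, Cardinal.add_one_eq (Cardinal.aleph0_le_mk S)]
  exact ⟨optionEquivProd.symm.trans (reindex e)⟩

theorem nonempty_czero_equiv [Infinite S] :
    Nonempty (czero S (czero S X) ≃L[ℝ] czero S X) := by
  obtain ⟨e⟩ : Nonempty (S × S ≃ S) := Cardinal.eq.1 <| by
    rw [Cardinal.mk_prod, Cardinal.lift_id, Cardinal.mul_eq_self (Cardinal.aleph0_le_mk S)]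
  exact ⟨uncurryEquiv.trans (reindex e)⟩

section Iio

variable {β : Ordinal}

def extend (H : czero (Iio β) X) (s : Ordinal) : X := if h : s < β then H ⟨s, h⟩ else 0

theorem extend_of_lt (H : czero (Iio β) X) {s : Ordinal} (h : s < β) : H.extend s = H ⟨s, h⟩ :=
  dif_pos h

theorem norm_extend_le (H : czero (Iio β) X) (s : Ordinal) : ‖H.extend s‖ ≤ ‖H‖ := by
  unfold extend
  split_ifs
  exacts [H.norm_apply_le _, by simp]

theorem finite_setOf_lt_norm_extend (H : czero (Iio β) X) {ε : ℝ} (hε : 0 < ε) :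
    {s | ε < ‖H.extend s‖}.Finite := by
  refine ((H.finite_setOf_lt_norm hε).image Subtype.val).subset fun s hs => ?_
  by_cases h : s < β
  · exact ⟨⟨s, h⟩, show ε < ‖H ⟨s, h⟩‖ by rw [← extend_of_lt H h]; exact hs, rfl⟩
  · simp [extend, h, not_lt.2 hε.le] at hs

end Iio

end czero

namespace Czero

variable {γ : Ordinal}

def extend (f : Czero γ) : Ordinal → ℝ := IicExtend (f : C(Iic γ, ℝ))

theorem continuous_extend (f : Czero γ) : Continuous f.extend :=
  (f : C(Iic γ, ℝ)).continuous.comp ((continuous_const.min continuous_id).subtype_mk _)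

theorem extend_of_le (f : Czero γ) {x : Ordinal} (hx : x ≤ γ) :
    f.extend x = (f : C(Iic γ, ℝ)) ⟨x, hx⟩ :=
  IicExtend_of_mem _ hx

theorem extend_of_ge (f : Czero γ) {x : Ordinal} (hx : γ ≤ x) : f.extend x = 0 :=
  (IicExtend_of_le _ hx).trans f.2

theorem abs_extend_le (f : Czero γ) (x : Ordinal) : |f.extend x| ≤ ‖f‖ :=
  (f : C(Iic γ, ℝ)).norm_coe_le_norm _

@[simp]
theorem extend_add (f g : Czero γ) : (f + g).extend = f.extend + g.extend := rfl

@[simp]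
theorem extend_smul (c : ℝ) (f : Czero γ) : (c • f).extend = c • f.extend := rfl

theorem ext_of_extend {f g : Czero γ} (h : ∀ x ≤ γ, f.extend x = g.extend x) : f = g :=
  Subtype.ext <| ContinuousMap.ext fun x => by simpa [extend_of_le _ x.2] using h x x.2

theorem norm_le_of_forall_le {f : Czero γ} {C : ℝ} (hC : 0 ≤ C)
    (h : ∀ x ≤ γ, |f.extend x| ≤ C) : ‖f‖ ≤ C :=
  ((f : C(Iic γ, ℝ)).norm_le hC).2 fun x => by simpa [extend_of_le _ x.2] using h x x.2

def ofFun (F : Ordinal → ℝ) (hF : Continuous F) (hγ : F γ = 0) : Czero γ :=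
  ⟨⟨fun x => F x, hF.comp continuous_subtype_val⟩, hγ⟩

theorem extend_ofFun {F : Ordinal → ℝ} (hF : Continuous F) (hγ : F γ = 0) {x : Ordinal}
    (hx : x ≤ γ) : (ofFun F hF hγ).extend x = F x :=
  extend_of_le _ hx

section Blocks

open Order

variable {α β : Ordinal}

def blockTrace (hα : 0 < α) (f : Czero (α * β)) : Czero β :=
  .ofFun (fun s => f.extend (α * s))
    (f.continuous_extend.comp (isNormal_mul_right hα).continuous) (f.extend_of_ge le_rfl)

theorem norm_blockTrace_le (hα : 0 < α) (f : Czero (α * β)) : ‖blockTrace hα f‖ ≤ ‖f‖ :=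
  norm_le_of_forall_le (norm_nonneg f) fun s hs => by
    rw [blockTrace, extend_ofFun _ _ hs]
    exact f.abs_extend_le _

def blockDiff (hα : ω ≤ α) (f : Czero (α * β)) (s : Ordinal) : Czero α :=
  .ofFun (fun t => f.extend (α * s + 1 + t) - f.extend (α * s + α))
    ((f.continuous_extend.comp (isNormal_add_right _).continuous).sub continuous_const)
    (sub_eq_zero.2 (congrArg f.extend (add_one_add_of_omega0_le _ hα)))

theorem norm_blockDiff_le (hα : ω ≤ α) (f : Czero (α * β)) (s : Ordinal) :
    ‖blockDiff hα f s‖ ≤ 2 * ‖f‖ :=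
  norm_le_of_forall_le (by positivity) fun t ht => by
    rw [blockDiff, extend_ofFun _ _ ht]
    linarith [abs_sub (f.extend (α * s + 1 + t)) (f.extend (α * s + α)),
      f.abs_extend_le (α * s + 1 + t), f.abs_extend_le (α * s + α)]

theorem finite_setOf_lt_norm_blockDiff (hα : ω ≤ α) (f : Czero (α * β)) {ε : ℝ} (hε : 0 < ε) :
    {s | s < β ∧ ε < ‖blockDiff hα f s‖}.Finite := by
  refine (f.continuous_extend.finite_setOf_lt_dist_block α β hε).subset
    fun s ⟨hsβ, hs⟩ => ⟨hsβ, ?_⟩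
  by_contra! h
  refine hs.not_ge (norm_le_of_forall_le hε.le fun t ht => ?_)
  rw [blockDiff, extend_ofFun _ _ ht, ← Real.dist_eq]
  exact h _ (add_one_add_mem_Ioc hα ht _)

def blocks (hα : ω ≤ α) (f : Czero (α * β)) : czero (Iio β) (Czero α) :=
  czero.mk (fun s => blockDiff hα f s) fun ε hε =>
    (show (Subtype.val ⁻¹' {s | s < β ∧ ε < ‖blockDiff hα f s‖}).Finite from
      (finite_setOf_lt_norm_blockDiff hα f hε).preimage Subtype.val_injective.injOn).subset
      fun s hs => ⟨s.2, hs⟩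

-- `h` moved onto the block `(a, a + α]` along `t ↦ a + 1 + t`, and extended by `0`.
def blockPiece (h : Czero α) (a x : Ordinal) : ℝ := if x ≤ a then 0 else h.extend (x - (a + 1))

theorem continuous_blockPiece (h : Czero α) (a : Ordinal) : Continuous (blockPiece h a) :=
  continuous_if
    (by rw [show {x | x ≤ a} = Iic a from rfl, (isClopen_Iic_of_succOrder a).frontier_eq]; simp)
    continuousOn_const (h.continuous_extend.comp (continuous_sub_right _)).continuousOn

theorem abs_blockPiece_le (h : Czero α) (a x : Ordinal) : |blockPiece h a x| ≤ ‖h‖ := by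
  unfold blockPiece
  split_ifs
  exacts [by simp, h.abs_extend_le _]

theorem blockPiece_add_one_add (h : Czero α) (a t : Ordinal) :
    blockPiece h a (a + 1 + t) = h.extend t := by
  rw [blockPiece, if_neg (not_le.2 ((lt_add_one a).trans_le le_self_add)), Ordinal.add_sub_cancel]

theorem blockPiece_add_self (hα : ω ≤ α) (h : Czero α) (a : Ordinal) :
    blockPiece h a (a + α) = 0 := by
  rw [← add_one_add_of_omega0_le a hα, blockPiece_add_one_add, h.extend_of_ge le_rfl]

def blockSum (H : czero (Iio β) (Czero α)) (x : Ordinal) : ℝ :=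
  blockPiece (H.extend (x / α)) (α * (x / α)) x

theorem blockSum_mul (hα : α ≠ 0) (H : czero (Iio β) (Czero α)) (s : Ordinal) :
    blockSum H (α * s) = 0 := by
  rw [blockSum, Ordinal.mul_div_cancel _ hα, blockPiece, if_pos le_rfl]

theorem blockSum_of_mem_Ioc (hα : ω ≤ α) (H : czero (Iio β) (Czero α)) {p x : Ordinal}
    (hx : x ∈ Ioc (α * p) (α * p + α)) : blockSum H x = blockPiece (H.extend p) (α * p) x := by
  have hα0 : α ≠ 0 := (omega0_pos.trans_le hα).ne'
  rcases hx.2.eq_or_lt with rfl | hlt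
  · rw [blockPiece_add_self hα, ← mul_succ, blockSum_mul hα0]
  · rw [blockSum, div_eq_of_mem_Ico hα0 ⟨hx.1.le, hlt⟩]

theorem continuousAt_blockSum_mul (hα : α ≠ 0) (H : czero (Iio β) (Czero α)) {s : Ordinal}
    (hs : IsSuccLimit s) : ContinuousAt (blockSum H) (α * s) := by
  have hpos : 0 < α * s := mul_pos (pos_iff_ne_zero.2 hα) hs.bot_lt
  rw [ContinuousAt, blockSum_mul hα,
    (SuccOrder.hasBasis_nhds_Ioc_of_exists_lt ⟨0, hpos⟩).tendsto_iff Metric.nhds_basis_closedBall]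
  intro ε hε
  obtain ⟨a, has, ha⟩ := hs.exists_forall_lt_of_finite (H.finite_setOf_lt_norm_extend hε)
  refine ⟨α * a, mul_lt_mul_of_pos_left has (pos_iff_ne_zero.2 hα), fun x hx => ?_⟩
  rw [mem_closedBall, dist_zero_right, Real.norm_eq_abs]
  rcases hx.2.eq_or_lt with rfl | hlt
  · rw [blockSum_mul hα, abs_zero]
    exact hε.le
  refine (abs_blockPiece_le _ _ _).trans (not_lt.1 fun hε' => ?_)
  exact (ha _ hε' ((lt_mul_iff_div_lt hα).1 hlt)).not_ge ((mul_le_iff_le_div hα).1 hx.1.le)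

theorem continuous_blockSum (hα : ω ≤ α) (H : czero (Iio β) (Czero α)) :
    Continuous (blockSum H) := by
  have hα0 : α ≠ 0 := (omega0_pos.trans_le hα).ne'
  refine continuous_iff_continuousAt.2 fun x => ?_
  rcases eq_zero_or_mem_Ioc_or_eq_mul hα0 x with rfl | ⟨p, hp⟩ | ⟨s, hs, rfl⟩
  · rw [ContinuousAt, SuccOrder.nhds_of_isMin fun _ _ => zero_le]
    exact tendsto_pure_nhds _ _
  · exact (continuous_blockPiece _ _).continuousAt.congr_of_eventuallyEq
      (eventuallyEq_of_mem (Ioc_mem_nhds_of_mem hp) fun y hy => blockSum_of_mem_Ioc hα H hy)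
  · exact continuousAt_blockSum_mul hα0 H hs

def glue (H : czero (Iio β) (Czero α)) (u : Czero β) (x : Ordinal) : ℝ :=
  u.extend (ceilDiv α x) + blockSum H x

theorem glue_mul (hα : α ≠ 0) (H : czero (Iio β) (Czero α)) (u : Czero β) (s : Ordinal) :
    glue H u (α * s) = u.extend s := by
  rw [glue, ceilDiv_mul hα, blockSum_mul hα, add_zero]

theorem glue_of_mem_Ioc (hα : ω ≤ α) (H : czero (Iio β) (Czero α)) (u : Czero β)
    {p x : Ordinal} (hx : x ∈ Ioc (α * p) (α * p + α)) :
    glue H u x = u.extend (succ p) + blockPiece (H.extend p) (α * p) x := by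
  rw [glue, ceilDiv_eq_succ (omega0_pos.trans_le hα).ne' hx, blockSum_of_mem_Ioc hα H hx]

theorem continuous_glue (hα : ω ≤ α) (H : czero (Iio β) (Czero α)) (u : Czero β) :
    Continuous (glue H u) :=
  (u.continuous_extend.comp (gc_ceilDiv (omega0_pos.trans_le hα).ne').continuous_l).add
    (continuous_blockSum hα H)

def ofBlocks (hα : ω ≤ α) (H : czero (Iio β) (Czero α)) (u : Czero β) : Czero (α * β) :=
  .ofFun (glue H u) (continuous_glue hα H u)
    ((glue_mul (omega0_pos.trans_le hα).ne' H u β).trans (u.extend_of_ge le_rfl))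

theorem norm_ofBlocks_le (hα : ω ≤ α) (H : czero (Iio β) (Czero α)) (u : Czero β) :
    ‖ofBlocks hα H u‖ ≤ ‖u‖ + ‖H‖ :=
  norm_le_of_forall_le (by positivity) fun x hx => by
    rw [ofBlocks, extend_ofFun _ _ hx]
    exact (abs_add_le _ _).trans (add_le_add (u.abs_extend_le _)
      ((abs_blockPiece_le _ _ _).trans (H.norm_extend_le _)))

theorem extend_ofBlocks_blocks (hα : ω ≤ α) (f : Czero (α * β)) {x : Ordinal}
    (hx : x ≤ α * β) :
    (ofBlocks hα (blocks hα f) (blockTrace (omega0_pos.trans_le hα) f)).extend x =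
      f.extend x := by
  have hα0 : 0 < α := omega0_pos.trans_le hα
  rw [ofBlocks, extend_ofFun _ _ hx]
  have hmul : ∀ s ≤ β, glue (blocks hα f) (blockTrace hα0 f) (α * s) = f.extend (α * s) :=
    fun s hs => by rw [glue_mul hα0.ne', blockTrace, extend_ofFun _ _ hs]
  rcases eq_zero_or_mem_Ioc_or_eq_mul hα0.ne' x with rfl | ⟨p, hp⟩ | ⟨s, -, rfl⟩
  · simpa using hmul 0 zero_le
  · have hpβ : p < β := (mul_lt_mul_iff_of_pos_left hα0).1 (hp.1.trans_le hx)
    obtain ⟨t, ht, rfl⟩ := exists_eq_add_one_add_of_mem_Ioc hα hp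
    rw [glue_of_mem_Ioc hα _ _ hp, blockPiece_add_one_add, czero.extend_of_lt _ hpβ, blocks,
      czero.mk_apply, blockDiff, extend_ofFun _ _ ht, blockTrace,
      extend_ofFun _ _ (succ_le_of_lt hpβ), mul_succ]
    ring
  · exact hmul s ((mul_le_mul_iff_of_pos_left hα0).1 hx)

theorem blockTrace_ofBlocks (hα : ω ≤ α) (H : czero (Iio β) (Czero α)) (u : Czero β) :
    blockTrace (omega0_pos.trans_le hα) (ofBlocks hα H u) = u :=
  ext_of_extend fun s hs => by
    rw [blockTrace, extend_ofFun _ _ hs, ofBlocks, extend_ofFun _ _ (mul_le_mul_right hs α),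
      glue_mul (omega0_pos.trans_le hα).ne']

theorem blocks_ofBlocks (hα : ω ≤ α) (H : czero (Iio β) (Czero α)) (u : Czero β) :
    blocks hα (ofBlocks hα H u) = H := by
  ext s : 1
  refine ext_of_extend fun t ht => ?_
  have hend : α * s + α ≤ α * β := by
    rw [← mul_succ]
    exact mul_le_mul_right (succ_le_of_lt s.2) α
  have hmem := add_one_add_mem_Ioc hα ht (α * s)
  rw [blocks, czero.mk_apply, blockDiff, extend_ofFun _ _ ht, ofBlocks,
    extend_ofFun _ _ (hmem.2.trans hend), extend_ofFun _ _ hend, glue_of_mem_Ioc hα _ _ hmem,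
    glue_of_mem_Ioc hα _ _ (right_mem_Ioc.2 (lt_add_of_pos_right _ (omega0_pos.trans_le hα))),
    blockPiece_add_one_add, blockPiece_add_self hα, czero.extend_of_lt _ s.2]
  simp

def blockEquiv (hα : ω ≤ α) : Czero (α * β) ≃L[ℝ] czero (Iio β) (Czero α) × Czero β :=
  LinearEquiv.toContinuousLinearEquivOfBounds
    { toFun := fun f => (blocks hα f, blockTrace (omega0_pos.trans_le hα) f)
      invFun := fun p => ofBlocks hα p.1 p.2
      map_add' := fun f g => Prod.ext
        (czero.ext fun s => ext_of_extend fun t ht => by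
          simp only [Prod.fst_add, blocks, czero.mk_apply, blockDiff, czero.add_apply,
            extend_add, extend_ofFun _ _ ht, Pi.add_apply]
          ring)
        (ext_of_extend fun s hs => by simp [blockTrace, extend_ofFun _ _ hs])
      map_smul' := fun c f => Prod.ext
        (czero.ext fun s => ext_of_extend fun t ht => by
          simp only [Prod.smul_fst, blocks, czero.mk_apply, blockDiff, czero.smul_apply,
            extend_smul, extend_ofFun _ _ ht, Pi.smul_apply, _root_.smul_eq_mul,
            RingHom.id_apply]
          ring)
        (ext_of_extend fun s hs => by simp [blockTrace, extend_ofFun _ _ hs])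
      left_inv := fun f => ext_of_extend fun _ hx => extend_ofBlocks_blocks hα f hx
      right_inv := fun p =>
        Prod.ext (blocks_ofBlocks hα p.1 p.2) (blockTrace_ofBlocks hα p.1 p.2) }
    2 2
    (fun f => max_le
      (czero.norm_le_of_forall_le (by positivity) fun s => norm_blockDiff_le hα f s)
      ((norm_blockTrace_le (omega0_pos.trans_le hα) f).trans (by linarith [norm_nonneg f])))
    (fun p => (norm_ofBlocks_le hα p.1 p.2).trans (by linarith [norm_fst_le p, norm_snd_le p]))

end Blocks

end Czero

theorem infinite_Iio_of_omega0_le {δ : Ordinal} (hδ : ω ≤ δ) : Infinite (Iio δ) :=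
  Infinite.of_injective (fun n : ℕ => (⟨n, (natCast_lt_omega0 n).trans_le hδ⟩ : Iio δ))
    fun _ _ h => Nat.cast_injective (congrArg Subtype.val h)

theorem nonempty_czero_opow_equiv {δ : Ordinal} (hδ : ω ≤ δ) {m : ℕ} (hm : 2 ≤ m) :
    Nonempty (Czero (δ ^ (m : Ordinal)) ≃L[ℝ] czero (Iio δ) (Czero δ)) := by
  have : Infinite (Iio δ) := infinite_Iio_of_omega0_le hδ
  obtain ⟨absorb⟩ := czero.nonempty_prod_equiv (S := Iio δ) (X := Czero δ)
  induction m, hm using Nat.le_induction with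
  | base =>
    rw [show δ ^ ((2 : ℕ) : Ordinal) = δ * δ by rw [opow_natCast, pow_two]]
    exact ⟨(Czero.blockEquiv hδ).trans absorb⟩
  | succ m hm ih =>
    obtain ⟨e⟩ := ih
    obtain ⟨square⟩ := czero.nonempty_czero_equiv (S := Iio δ) (X := Czero δ)
    have hδm : ω ≤ δ ^ (m : Ordinal) :=
      hδ.trans (left_le_opow δ (by exact_mod_cast (by omega : 0 < m)))
    rw [Nat.cast_succ, opow_add_one]
    exact ⟨(Czero.blockEquiv hδm).trans
      ((((czero.congrRight e).trans square).prodCongr (.refl ℝ _)).trans absorb)⟩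

theorem statement2 (γ : Ordinal) (n : ℕ) (hn : 1 < n) :
    Nonempty (Czero (ω ^ (ω ^ γ * n)) ≃L[ℝ]
      czero (Set.Iio (ω ^ ω ^ γ)) (Czero (ω ^ ω ^ γ))) := by
  rw [opow_mul]
  exact nonempty_czero_opow_equiv (left_le_opow ω (opow_pos γ omega0_pos)) hn
end
end

section
/- For a Banach space X, Sz(X) = 1 if and only if X is finite dimensional. -/
set_option synthInstance.maxHeartbeats 1000000
set_option maxHeartbeats 1000000

noncomputable section

open Ordinal Set Metric

/-! In finite dimensions the weak* and norm topologies on the dual coincide, so every functional has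
a w*-neighbourhood of norm-diameter below ε and the first ε-derivation already empties the ball:
Sz(X) = 1. In infinite dimensions every w*-neighbourhood of 0 contains all functionals vanishing on
some finite set, and among those there are functionals of norm one; so 0 survives the first
ε-derivation of the dual ball for every ε < 1, whence Sz(X, 1/2) ≥ 2. -/

open Topology Filter

theorem WeakDual.exists_finite_forall_mem_of_mem_nhds_zero {𝕜 E : Type*} [CommSemiring 𝕜]
    [TopologicalSpace 𝕜] [ContinuousAdd 𝕜] [ContinuousConstSMul 𝕜 𝕜] [AddCommMonoid E]
    [Module 𝕜 E] [TopologicalSpace E] {U : Set (WeakDual 𝕜 E)} (hU : U ∈ 𝓝 0) :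
    ∃ I : Set E, I.Finite ∧ ∀ f : WeakDual 𝕜 E, (∀ x ∈ I, f x = 0) → f ∈ U := by
  have hind : IsInducing fun (f : WeakDual 𝕜 E) (x : E) => f x := ⟨rfl⟩
  rw [hind.nhds_eq_comap, mem_comap] at hU
  obtain ⟨W, hW, hWU⟩ := hU
  rw [nhds_pi, Filter.mem_pi] at hW
  obtain ⟨I, hI, t, ht, hIt⟩ := hW
  refine ⟨I, hI, fun f hf => hWU (hIt fun x hx => ?_)⟩
  change f x ∈ t x
  rw [hf x hx]
  exact mem_of_mem_nhds (ht x)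

theorem exists_norm_eq_one_forall_eq_zero_of_finite {𝕜 E : Type*} [RCLike 𝕜]
    [NormedAddCommGroup E] [NormedSpace 𝕜 E] (hE : ¬FiniteDimensional 𝕜 E) {s : Set E}
    (hs : s.Finite) : ∃ f : StrongDual 𝕜 E, ‖f‖ = 1 ∧ ∀ x ∈ s, f x = 0 := by
  set M := Submodule.span 𝕜 s
  have : FiniteDimensional 𝕜 M := .span_of_finite 𝕜 hs
  have : IsClosed (M : Set E) := M.closed_of_finiteDimensional
  obtain ⟨x, -, hx⟩ := SetLike.exists_of_lt
    (lt_top_iff_ne_top.2 fun hM => hE ⟨Submodule.fg_def.2 ⟨s, hs, hM⟩⟩)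
  obtain ⟨g, hg⟩ :=
    SeparatingDual.exists_ne_zero (R := 𝕜) (mt (Submodule.Quotient.mk_eq_zero M).1 hx)
  have hf : g.comp M.mkQL ≠ 0 := fun h => hg (congr($h x))
  refine ⟨(‖g.comp M.mkQL‖⁻¹ : 𝕜) • g.comp M.mkQL, norm_smul_inv_norm hf, fun y hy => ?_⟩
  simp [(Submodule.Quotient.mk_eq_zero M).2 (Submodule.subset_span hy)]

section Szlenk

variable {X : Type*} [NormedAddCommGroup X] [NormedSpace ℝ X]

theorem szIter_zero (ε : ℝ) (B : Set (StrongDual ℝ X)) : szIter X ε B 0 = B :=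
  Ordinal.limitRecOn_zero _ _ _

theorem szIter_one (ε : ℝ) (B : Set (StrongDual ℝ X)) : szIter X ε B 1 = szDeriv X ε B := by
  rw [szIter, ← zero_add 1, Ordinal.limitRecOn_add_one, Ordinal.limitRecOn_zero]

theorem isWstarOpen_of_isOpen [FiniteDimensional ℝ X] {V : Set (StrongDual ℝ X)}
    (hV : IsOpen V) : IsWstarOpen X V := by
  have : FiniteDimensional ℝ (WeakDual ℝ X) := StrongDual.toWeakDual.finiteDimensional
  rw [IsWstarOpen, LinearEquiv.image_eq_preimage_symm]
  exact hV.preimage (LinearMap.continuous_of_finiteDimensional _)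

theorem szDeriv_eq_empty [FiniteDimensional ℝ X] {ε : ℝ} (hε : 0 < ε)
    (B : Set (StrongDual ℝ X)) : szDeriv X ε B = ∅ := by
  refine eq_empty_of_forall_notMem fun f hf => ?_
  have hlt := hf.2 _ (isWstarOpen_of_isOpen isOpen_ball)
    (mem_ball_self (by positivity : 0 < ε / 3))
  have hle : diam (B ∩ ball f (ε / 3)) ≤ 2 * (ε / 3) :=
    (diam_mono inter_subset_right isBounded_ball).trans (diam_ball (by positivity))
  linarith

theorem szIter_one_eq_empty [FiniteDimensional ℝ X] {ε : ℝ} (hε : 0 < ε)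
    (B : Set (StrongDual ℝ X)) : szIter X ε B 1 = ∅ := by
  rw [szIter_one, szDeriv_eq_empty hε]

theorem exists_norm_eq_one_mem_of_isWstarOpen (hX : ¬FiniteDimensional ℝ X)
    {V : Set (StrongDual ℝ X)} (hV : IsWstarOpen X V) (h0 : 0 ∈ V) : ∃ f ∈ V, ‖f‖ = 1 := by
  obtain ⟨I, hI, hIV⟩ :=
    WeakDual.exists_finite_forall_mem_of_mem_nhds_zero (hV.mem_nhds ⟨0, h0, map_zero _⟩)
  obtain ⟨f, hf, hfI⟩ := exists_norm_eq_one_forall_eq_zero_of_finite hX hI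
  obtain ⟨g, hg, hgf⟩ := hIV (StrongDual.toWeakDual f) hfI
  exact ⟨f, StrongDual.toWeakDual.injective hgf ▸ hg, hf⟩

theorem zero_mem_szDeriv_closedBall (hX : ¬FiniteDimensional ℝ X) {ε : ℝ} (hε : ε < 1) :
    (0 : StrongDual ℝ X) ∈ szDeriv X ε (closedBall 0 1) := by
  refine ⟨mem_closedBall_self zero_le_one, fun V hV h0 => ?_⟩
  obtain ⟨f, hfV, hf⟩ := exists_norm_eq_one_mem_of_isWstarOpen hX hV h0
  calc ε < dist f 0 := by rwa [dist_zero_right, hf]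
    _ ≤ diam (closedBall 0 1 ∩ V) :=
      dist_le_diam_of_mem (isBounded_closedBall.subset inter_subset_left)
        ⟨by simp [hf], hfV⟩ ⟨mem_closedBall_self zero_le_one, h0⟩

theorem zero_mem_szIter_closedBall_of_le_one (hX : ¬FiniteDimensional ℝ X) {ε : ℝ} (hε : ε < 1)
    {β : Ordinal} (hβ : β ≤ 1) : (0 : StrongDual ℝ X) ∈ szIter X ε (closedBall 0 1) β := by
  rcases Order.le_one_iff.1 hβ with rfl | rfl
  · rw [szIter_zero]
    exact mem_closedBall_self zero_le_one
  · rw [szIter_one]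
    exact zero_mem_szDeriv_closedBall hX hε

theorem szIter_SzE_eq_empty {ε : ℝ}
    (h : ∃ β, szIter X ε (closedBall (0 : StrongDual ℝ X) 1) β = ∅) :
    szIter X ε (closedBall 0 1) (SzE X ε) = ∅ :=
  csInf_mem h

theorem SzE_le_Sz {ε : ℝ} (hε : 0 < ε) : SzE X ε ≤ Sz X :=
  le_ciSup Ordinal.bddAbove_of_small (⟨ε, hε⟩ : {ε : ℝ // 0 < ε})

theorem SzE_eq_one [FiniteDimensional ℝ X] {ε : ℝ} (hε : 0 < ε) : SzE X ε = 1 := by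
  have h1 := szIter_one_eq_empty (X := X) hε (closedBall 0 1)
  refine le_antisymm (csInf_le' h1) (Order.one_le_iff_pos.2 (pos_iff_ne_zero.2 fun h0 => ?_))
  have hempty := szIter_SzE_eq_empty ⟨1, h1⟩
  rw [h0, szIter_zero] at hempty
  exact (nonempty_closedBall.2 zero_le_one).ne_empty hempty

theorem Sz_eq_one [FiniteDimensional ℝ X] : Sz X = 1 := by
  have : Nonempty {ε : ℝ // 0 < ε} := ⟨⟨1, one_pos⟩⟩
  exact (iSup_congr fun ε => SzE_eq_one ε.2).trans ciSup_const

end Szlenk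

theorem statement10_general (X : Type*) [NormedAddCommGroup X] [NormedSpace ℝ X] :
    (SzDefined X ∧ Sz X = 1) ↔ FiniteDimensional ℝ X := by
  refine ⟨fun ⟨hdef, hSz⟩ => ?_, fun _ => ⟨fun ε hε => ⟨1, szIter_one_eq_empty hε _⟩, Sz_eq_one⟩⟩
  by_contra hX
  have hle : SzE X (1 / 2) ≤ 1 := hSz ▸ SzE_le_Sz (by norm_num)
  have h0 := zero_mem_szIter_closedBall_of_le_one hX (by norm_num : (1 / 2 : ℝ) < 1) hle
  exact eq_empty_iff_forall_notMem.1 (szIter_SzE_eq_empty (hdef _ (by norm_num))) 0 h0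

theorem statement10 (X : Type*) [NormedAddCommGroup X] [NormedSpace ℝ X] [CompleteSpace X] :
    (SzDefined X ∧ Sz X = 1) ↔ FiniteDimensional ℝ X :=
  statement10_general X
end
end
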